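/- arXiv:2412.17236 — 3 statements merged into one kernel-verified Lean document; each statement's English description precedes it below -/
import Mathlib

section
/- Let n ≥ 2 and let i, j ∈ [n] with i ≠ j. Let E_{i,j}(BP_n) denote the set of edges of BP_n with one endpoint whose last entry is i and the other endpoint whose last entry is j. If i ≠ −j, then |E_{i,j}(BP_n)| = (n−2)! · 2^{n−2}; if i = −j, then E_{i,j}(BP_n) is empty. -/
/-- A signed permutation of `⟨n⟩ = {1, …, n}`: a function `u : Fin n → ℤ` with all entries in
`[n] = {±1, …, ±n}` whose absolute values form a permutation of `{1, …, n}`. -/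
def SignedPerm (n : ℕ) : Type :=
  {u : Fin n → ℤ // (∀ i, u i ≠ 0 ∧ (u i).natAbs ≤ n) ∧
    Function.Injective fun i => (u i).natAbs}

instance (n : ℕ) : DecidableEq (SignedPerm n) := Subtype.instDecidableEq

/-- The index map reversing the first `k+1` positions. -/
def revIdx {n : ℕ} (k : Fin n) (i : Fin n) : Fin n :=
  if i.val ≤ k.val then ⟨k.val - i.val, lt_of_le_of_lt (Nat.sub_le _ _) k.isLt⟩ else i

lemma revIdx_involutive {n : ℕ} (k : Fin n) : Function.Involutive (revIdx k) := by
  intro i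
  unfold revIdx
  by_cases h : i.val ≤ k.val
  · rw [if_pos h]
    rw [if_pos (by simp)]
    exact Fin.ext (by simp; omega)
  · rw [if_neg h, if_neg h]

/-- The `(k+1)`-st prefix reversal of `u : Fin n → ℤ`: negate and reverse the first
`k+1` entries. (Here `k : Fin n`, so this covers the 1st through `n`-th prefix reversals.) -/
def prefixRev {n : ℕ} (k : Fin n) (u : Fin n → ℤ) : Fin n → ℤ :=
  fun i => if i.val ≤ k.val then -u (revIdx k i) else u i

/-- The prefix reversal of a signed permutation is a signed permutation. -/
def prefixRevPerm {n : ℕ} (k : Fin n) (u : SignedPerm n) : SignedPerm n :=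
  ⟨prefixRev k u.1, by
    have h1 := u.2.1
    have h2 := u.2.2
    have key : ∀ i, ((prefixRev k u.1) i).natAbs = (u.1 (revIdx k i)).natAbs := by
      intro i
      by_cases h : i.val ≤ k.val
      · simp [prefixRev, h]
      · simp [prefixRev, revIdx, h]
    refine ⟨fun i => ⟨?_, ?_⟩, ?_⟩
    · show prefixRev k u.1 i ≠ 0
      by_cases h : i.val ≤ k.val <;> simp [prefixRev, h]
      · exact (h1 _).1
      · exact (h1 _).1
    · show ((prefixRev k u.1) i).natAbs ≤ n
      rw [key i]
      exact (h1 _).2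
    · show Function.Injective fun i => ((prefixRev k u.1) i).natAbs
      have : (fun i => ((prefixRev k u.1) i).natAbs) =
        (fun i => (u.1 i).natAbs) ∘ revIdx k := funext key
      rw [this]
      exact h2.comp (revIdx_involutive k).injective⟩

/-- The `n`-dimensional burnt pancake graph: vertices are the signed permutations of
`{1, …, n}`, and `u, v` are adjacent iff one is a prefix reversal of the other. -/
def burntPancakeGraph (n : ℕ) : SimpleGraph (SignedPerm n) where
  Adj u v := u ≠ v ∧ ∃ k : Fin n, v = prefixRevPerm k u ∨ u = prefixRevPerm k v
  symm := by
    constructor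
    rintro u v ⟨hne, k, h⟩
    exact ⟨hne.symm, k, h.symm⟩
  loopless := by constructor; rintro u ⟨hne, -⟩; exact hne rfl

/-- The last entry of a signed permutation. -/
def lastEntry {n : ℕ} (u : SignedPerm n) : ℤ :=
  if h : 0 < n then u.1 ⟨n - 1, by omega⟩ else 0

/-- `M` is a set of edges of `G` forming a matching: no two distinct edges of `M`
share an endpoint. -/
def IsMatchingEdgeSet {V : Type*} (G : SimpleGraph V) (M : Finset (Sym2 V)) : Prop :=
  (∀ e ∈ M, e ∈ G.edgeSet) ∧
    ∀ e ∈ M, ∀ f ∈ M, e ≠ f → ∀ v : V, v ∈ e → v ∉ f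

/-- `V(M)`: the set of endpoints of the edges of `M`. -/
def matchingVerts {V : Type*} (M : Finset (Sym2 V)) : Set V :=
  {v | ∃ e ∈ M, v ∈ e}

/-- The graph obtained from `G` by deleting the endpoints of the edges of `M` and
the edges of `Fe`. -/
def faultyGraph {V : Type*} (G : SimpleGraph V) (M Fe : Finset (Sym2 V)) :
    SimpleGraph {v : V // v ∉ matchingVerts M} :=
  SimpleGraph.induce {v : V | v ∉ matchingVerts M} (G.deleteEdges (Fe : Set (Sym2 V)))

/-- A graph has a Hamiltonian cycle. -/
def HasHamiltonianCycle {V : Type*} [DecidableEq V] (G : SimpleGraph V) : Prop :=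
  ∃ (v : V) (p : G.Walk v v), p.IsHamiltonianCycle

/-- A graph is Hamiltonian connected: between any two distinct vertices there is a
Hamiltonian path. -/
def HamiltonianConnected {V : Type*} [DecidableEq V] (G : SimpleGraph V) : Prop :=
  ∀ u v : V, u ≠ v → ∃ p : G.Walk u v, p.IsHamiltonian

/-- `G` is `k`-hybrid fault Hamiltonian. -/
def HybridFaultHamiltonian {V : Type*} [DecidableEq V] (G : SimpleGraph V) (k : ℕ) : Prop :=
  ∀ M Fe : Finset (Sym2 V),
    IsMatchingEdgeSet G M →
    (∀ e ∈ Fe, e ∈ G.edgeSet) →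
    (∀ e ∈ Fe, ∀ v : V, v ∈ e → v ∉ matchingVerts M) →
    M.card + Fe.card ≤ k →
    HasHamiltonianCycle (faultyGraph G M Fe)

/-- `G` is `k`-hybrid fault Hamiltonian connected. -/
def HybridFaultHamiltonianConnected {V : Type*} [DecidableEq V] (G : SimpleGraph V) (k : ℕ) :
    Prop :=
  ∀ M Fe : Finset (Sym2 V),
    IsMatchingEdgeSet G M →
    (∀ e ∈ Fe, e ∈ G.edgeSet) →
    (∀ e ∈ Fe, ∀ v : V, v ∈ e → v ∉ matchingVerts M) →
    M.card + Fe.card ≤ k →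
    HamiltonianConnected (faultyGraph G M Fe)


lemma prefixRevPerm_involutive {n : ℕ} (k : Fin n) :
    Function.Involutive (prefixRevPerm (n := n) k) := by
  intro u
  apply Subtype.ext
  funext i
  show prefixRev k (prefixRev k u.1) i = u.1 i
  unfold prefixRev
  by_cases h : i.val ≤ k.val
  · have h2 : (revIdx k i).val ≤ k.val := by
      unfold revIdx
      rw [if_pos h]
      exact Nat.sub_le _ _
    rw [if_pos h, if_pos h2, revIdx_involutive k i, neg_neg]
  · rw [if_neg h, if_neg h]

lemma lastEntry_eq {n : ℕ} (hn : 0 < n) (u : SignedPerm n) :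
    lastEntry u = u.1 ⟨n - 1, by omega⟩ := by
  unfold lastEntry
  rw [dif_pos hn]

lemma lastEntry_prefixRevPerm_of_ne {n : ℕ} (hn : 0 < n) (k : Fin n) (hk : k.val ≠ n - 1)
    (u : SignedPerm n) : lastEntry (prefixRevPerm k u) = lastEntry u := by
  rw [lastEntry_eq hn, lastEntry_eq hn]
  show prefixRev k u.1 _ = _
  unfold prefixRev
  rw [if_neg (by simp only; have := k.isLt; omega)]

lemma lastEntry_prefixRevPerm_last {n : ℕ} (hn : 0 < n) (u : SignedPerm n) :
    lastEntry (prefixRevPerm ⟨n - 1, by omega⟩ u) = -u.1 ⟨0, hn⟩ := by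
  rw [lastEntry_eq hn]
  show prefixRev _ u.1 _ = _
  unfold prefixRev revIdx
  rw [if_pos le_rfl, if_pos le_rfl]
  simp only [Nat.sub_self]

lemma adj_of_lastEntry_ne {n : ℕ} (hn : 2 ≤ n) {u v : SignedPerm n}
    (h : (burntPancakeGraph n).Adj u v) (hne : lastEntry u ≠ lastEntry v) :
    v = prefixRevPerm ⟨n - 1, by omega⟩ u := by
  obtain ⟨-, k, hk | hk⟩ := h
  · by_cases hkval : k.val = n - 1
    · have : k = ⟨n - 1, by omega⟩ := Fin.ext hkval
      rwa [this] at hk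
    · exact absurd (hk ▸ lastEntry_prefixRevPerm_of_ne (by omega) k hkval u).symm hne
  · by_cases hkval : k.val = n - 1
    · have hk' : k = ⟨n - 1, by omega⟩ := Fin.ext hkval
      rw [hk', ] at hk
      rw [hk]
      exact (prefixRevPerm_involutive _ v).symm
    · exact absurd (hk ▸ lastEntry_prefixRevPerm_of_ne (by omega) k hkval v) hne

def buildFun (n : ℕ) (a b : ℤ) (w : Fin (n - 2) → ℤ) : Fin n → ℤ :=
  fun p => if h0 : p.val = 0 then a else if h1 : p.val = n - 1 then b
    else w ⟨p.val - 1, by have h2 := p.isLt; omega⟩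

lemma buildFun_zero {n : ℕ} (hn : 0 < n) (a b : ℤ) (w : Fin (n - 2) → ℤ) :
    buildFun n a b w ⟨0, hn⟩ = a := by
  simp [buildFun]

lemma buildFun_last {n : ℕ} (hn : 2 ≤ n) (a b : ℤ) (w : Fin (n - 2) → ℤ) :
    buildFun n a b w ⟨n - 1, by omega⟩ = b := by
  unfold buildFun
  rw [dif_neg (by simp only; omega), dif_pos rfl]

lemma buildFun_mid {n : ℕ} (a b : ℤ) (w : Fin (n - 2) → ℤ) (k : Fin (n - 2)) :
    buildFun n a b w ⟨k.val + 1, by have := k.isLt; omega⟩ = w k := by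
  unfold buildFun
  rw [dif_neg (by simp only; omega), dif_neg (by simp only; have := k.isLt; omega)]
  congr 1

set_option maxHeartbeats 1000000 in
lemma card_signedPerm_fixed_ends (n : ℕ) (hn : 2 ≤ n) (a b : ℤ)
    (ha0 : a ≠ 0) (han : a.natAbs ≤ n) (hb0 : b ≠ 0) (hbn : b.natAbs ≤ n)
    (hab : a.natAbs ≠ b.natAbs) :
    {u : SignedPerm n | u.1 ⟨n - 1, by omega⟩ = b ∧ u.1 ⟨0, by omega⟩ = a}.ncard
      = Nat.factorial (n - 2) * 2 ^ (n - 2) := by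
  classical
  set A : Finset ℕ := Finset.Icc 1 n \ {a.natAbs, b.natAbs} with hA
  have hmemA : ∀ x : ℕ, x ∈ A ↔ (1 ≤ x ∧ x ≤ n ∧ x ≠ a.natAbs ∧ x ≠ b.natAbs) := by
    intro x
    simp only [hA, Finset.mem_sdiff, Finset.mem_Icc, Finset.mem_insert, Finset.mem_singleton]
    tauto
  have hAcard : A.card = n - 2 := by
    have hsub : ({a.natAbs, b.natAbs} : Finset ℕ) ⊆ Finset.Icc 1 n := by
      intro x hx
      have ha1 : 0 < a.natAbs := Int.natAbs_pos.mpr ha0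
      have hb1 : 0 < b.natAbs := Int.natAbs_pos.mpr hb0
      simp only [Finset.mem_insert, Finset.mem_singleton] at hx
      rcases hx with rfl | rfl <;> simp only [Finset.mem_Icc] <;> omega
    rw [hA, Finset.card_sdiff_of_subset hsub, Finset.card_pair hab, Nat.card_Icc]
    omega
  set m := n - 2 with hm
  set wfun : (Fin m ↪ ↥A) → (Fin m → Bool) → Fin m → ℤ :=
    fun e s k => if s k then ((e k : ℕ) : ℤ) else -((e k : ℕ) : ℤ) with hwfun
  have hw_abs : ∀ e s k, ((wfun e s k).natAbs) = (e k : ℕ) := by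
    intro e s k
    by_cases h : s k <;> simp [hwfun, h]
  have hw_ne : ∀ e s k, wfun e s k ≠ 0 := by
    intro e s k h
    have h1 := ((hmemA (e k)).1 (e k).2).1
    have h2 := hw_abs e s k
    rw [h] at h2
    simp at h2
    omega
  have hbig : ∀ (e : Fin m ↪ ↥A) (s : Fin m → Bool),
      ((∀ i, buildFun n a b (wfun e s) i ≠ 0 ∧ (buildFun n a b (wfun e s) i).natAbs ≤ n) ∧
      Function.Injective fun i => (buildFun n a b (wfun e s) i).natAbs) := by
    intro e s
    constructor
    · intro p
      unfold buildFun
      split_ifs with h0 h1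
      · exact ⟨ha0, han⟩
      · exact ⟨hb0, hbn⟩
      · refine ⟨hw_ne e s _, ?_⟩
        rw [hw_abs]
        exact ((hmemA _).1 (e _).2).2.1
    · intro p q hpq
      simp only [buildFun] at hpq
      split_ifs at hpq with h0 h1 h2 h3 h4 h5
      · exact Fin.ext (by omega)
      · exact absurd hpq hab
      · rw [hw_abs] at hpq
        exact absurd hpq.symm (((hmemA _).1 (e _).2).2.2.1)
      · exact absurd hpq.symm hab
      · exact Fin.ext (by omega)
      · rw [hw_abs] at hpq
        exact absurd hpq.symm (((hmemA _).1 (e _).2).2.2.2)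
      · rw [hw_abs] at hpq
        exact absurd hpq (((hmemA _).1 (e _).2).2.2.1)
      · rw [hw_abs] at hpq
        exact absurd hpq (((hmemA _).1 (e _).2).2.2.2)
      · rw [hw_abs, hw_abs] at hpq
        have h6 := e.injective (Subtype.ext hpq)
        have h7 := Fin.mk.inj_iff.mp h6
        exact Fin.ext (by omega)
  have hfmem : ∀ (e : Fin m ↪ ↥A) (s : Fin m → Bool),
      (⟨buildFun n a b (wfun e s), hbig e s⟩ : SignedPerm n) ∈
        {u : SignedPerm n | u.1 ⟨n - 1, by omega⟩ = b ∧ u.1 ⟨0, by omega⟩ = a} := by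
    intro e s
    have h0n : 0 < n := by omega
    refine ⟨?_, ?_⟩
    · exact buildFun_last hn a b (wfun e s)
    · exact buildFun_zero h0n a b (wfun e s)
  let f : (Fin m ↪ ↥A) × (Fin m → Bool) →
      {u : SignedPerm n | u.1 ⟨n - 1, by omega⟩ = b ∧ u.1 ⟨0, by omega⟩ = a} :=
    fun es => ⟨⟨buildFun n a b (wfun es.1 es.2), hbig es.1 es.2⟩, hfmem es.1 es.2⟩
  have hf : Function.Bijective f := by
    constructor
    · rintro ⟨e, s⟩ ⟨e', s'⟩ h
      have h1 := congrArg Subtype.val h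
      have h2 : buildFun n a b (wfun e s) = buildFun n a b (wfun e' s') :=
        congrArg Subtype.val h1
      have hwk : ∀ k, wfun e s k = wfun e' s' k := by
        intro k
        have h3 := congrFun h2 ⟨k.val + 1, by have := k.isLt; omega⟩
        rwa [buildFun_mid, buildFun_mid] at h3
      have he : e = e' := by
        apply DFunLike.ext
        intro k
        have h4 := congrArg Int.natAbs (hwk k)
        rw [hw_abs, hw_abs] at h4
        exact Subtype.ext h4
      subst he
      have hs : s = s' := by
        funext k
        have h3 := hwk k
        have h1' : 1 ≤ (e k : ℕ) := ((hmemA _).1 (e k).2).1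
        cases hsk : s k <;> cases hsk' : s' k <;>
          simp only [hwfun, hsk, hsk', if_true, if_false, Bool.false_eq_true] at h3 ⊢ <;>
          first
            | rfl
            | (exfalso; omega)
      subst hs
      rfl
    · rintro ⟨U, hub, hua⟩
      have hmid : ∀ k : Fin m, (U.1 ⟨k.val + 1, by have := k.isLt; omega⟩).natAbs ∈ A := by
        intro k
        rw [hmemA]
        have h1 := U.2.1 ⟨k.val + 1, by have := k.isLt; omega⟩
        have h1' : 0 < (U.1 ⟨k.val + 1, by have := k.isLt; omega⟩).natAbs :=
          Int.natAbs_pos.mpr h1.1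
        refine ⟨h1', h1.2, ?_, ?_⟩
        · intro hcon
          have h5 : (U.1 ⟨k.val + 1, by have := k.isLt; omega⟩).natAbs
              = (U.1 ⟨0, by omega⟩).natAbs := by exact hua ▸ hcon
          have h6 := U.2.2 h5
          have h7 := Fin.mk.inj_iff.mp h6
          omega
        · intro hcon
          have h5 : (U.1 ⟨k.val + 1, by have := k.isLt; omega⟩).natAbs
              = (U.1 ⟨n - 1, by omega⟩).natAbs := by exact hub ▸ hcon
          have h6 := U.2.2 h5
          have h7 := Fin.mk.inj_iff.mp h6
          have := k.isLt
          omega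
      let e : Fin m ↪ ↥A := ⟨fun k => ⟨_, hmid k⟩, by
        intro k k' hkk'
        have h5 : (U.1 ⟨k.val + 1, by have := k.isLt; omega⟩).natAbs
            = (U.1 ⟨k'.val + 1, by have := k'.isLt; omega⟩).natAbs :=
          congrArg Subtype.val hkk'
        have h6 := U.2.2 h5
        have h7 := Fin.mk.inj_iff.mp h6
        exact Fin.ext (by omega)⟩
      let s : Fin m → Bool := fun k => decide (0 < U.1 ⟨k.val + 1, by have := k.isLt; omega⟩)
      have h0n : 0 < n := by omega
      refine ⟨(e, s), ?_⟩
      apply Subtype.ext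
      apply Subtype.ext
      funext p
      show buildFun n a b (wfun e s) p = U.1 p
      unfold buildFun
      split_ifs with h0 h1
      · have hp : p = ⟨0, h0n⟩ := Fin.ext h0
        rw [hp]
        exact hua.symm
      · have hp : p = ⟨n - 1, by omega⟩ := Fin.ext h1
        rw [hp]
        exact hub.symm
      · have hplt := p.isLt
        set k : Fin m := ⟨p.val - 1, by omega⟩ with hk
        have hidx : (⟨k.val + 1, by have := k.isLt; omega⟩ : Fin n) = p :=
          Fin.ext (by simp only [hk]; omega)
        show wfun e s k = U.1 p
        have hek : (e k : ℕ) = (U.1 p).natAbs := by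
          show (U.1 _).natAbs = (U.1 p).natAbs
          exact congrArg (fun q => (U.1 q).natAbs) hidx
        have hsk : s k = decide (0 < U.1 p) := by
          show decide (0 < U.1 _) = decide (0 < U.1 p)
          exact congrArg (fun q => decide (0 < U.1 q)) hidx
        have hnz := (U.2.1 p).1
        show (if s k then ((e k : ℕ) : ℤ) else -((e k : ℕ) : ℤ)) = U.1 p
        rw [hek, hsk]
        by_cases hpos : 0 < U.1 p
        · rw [if_pos (by simpa using hpos)]
          omega
        · rw [if_neg (by simpa using hpos)]
          omega
  have hcard := Nat.card_congr (Equiv.ofBijective f hf)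
  rw [Nat.card_eq_fintype_card] at hcard
  rw [← Nat.card_coe_set_eq, ← hcard, Fintype.card_prod, Fintype.card_embedding_eq,
    Fintype.card_coe, hAcard, Fintype.card_fun, Fintype.card_fin, Fintype.card_bool,
    Nat.descFactorial_self]

/-- the number of edges between the sections `BP_n^i` and `BP_n^j`. -/
theorem burntPancake_edges_between_sections (n : ℕ) (hn : 2 ≤ n) (i j : ℤ)
    (hi0 : i ≠ 0) (hin : i.natAbs ≤ n) (hj0 : j ≠ 0) (hjn : j.natAbs ≤ n)
    (hij : i ≠ j) :
    (i ≠ -j →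
      {e ∈ (burntPancakeGraph n).edgeSet |
        ∃ u v : SignedPerm n, e = s(u, v) ∧ lastEntry u = i ∧ lastEntry v = j}.ncard
        = Nat.factorial (n - 2) * 2 ^ (n - 2)) ∧
    (i = -j →
      {e ∈ (burntPancakeGraph n).edgeSet |
        ∃ u v : SignedPerm n, e = s(u, v) ∧ lastEntry u = i ∧ lastEntry v = j} = ∅) := by
  have h0n : 0 < n := by omega
  constructor
  · intro hij'
    have habs : (-j).natAbs ≠ i.natAbs := by
      intro h
      rcases Int.natAbs_eq_natAbs_iff.mp h with h | h <;> omega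
    have hkey : {e ∈ (burntPancakeGraph n).edgeSet |
        ∃ u v : SignedPerm n, e = s(u, v) ∧ lastEntry u = i ∧ lastEntry v = j}
        = (fun u : SignedPerm n => s(u, prefixRevPerm ⟨n - 1, by omega⟩ u)) ''
          {u : SignedPerm n | u.1 ⟨n - 1, by omega⟩ = i ∧ u.1 ⟨0, by omega⟩ = -j} := by
      ext e
      constructor
      · rintro ⟨he, u, v, rfl, hu, hv⟩
        have hadj : (burntPancakeGraph n).Adj u v := (SimpleGraph.mem_edgeSet _).mp he
        have hne : lastEntry u ≠ lastEntry v := by rw [hu, hv]; exact hij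
        have hv' : v = prefixRevPerm ⟨n - 1, by omega⟩ u := adj_of_lastEntry_ne hn hadj hne
        have e2 := lastEntry_prefixRevPerm_last h0n u
        rw [← hv'] at e2
        have h1 : u.1 ⟨n - 1, by omega⟩ = i := by
          rw [lastEntry_eq h0n] at hu; exact hu
        have h2 : u.1 ⟨0, h0n⟩ = -j := by omega
        exact ⟨u, ⟨h1, h2⟩, by rw [hv']⟩
      · rintro ⟨u, ⟨hu1, hu2⟩, rfl⟩
        have lastu : lastEntry u = i := (lastEntry_eq h0n u).trans hu1
        have e2 := lastEntry_prefixRevPerm_last h0n u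
        have lastv : lastEntry (prefixRevPerm ⟨n - 1, by omega⟩ u) = j := by omega
        have hne : u ≠ prefixRevPerm ⟨n - 1, by omega⟩ u := by
          intro h
          have := congrArg lastEntry h
          rw [lastu, lastv] at this
          exact hij this
        refine ⟨(SimpleGraph.mem_edgeSet _).mpr ⟨hne, ⟨n - 1, by omega⟩, Or.inl rfl⟩,
          u, _, rfl, lastu, lastv⟩
    rw [hkey]
    have hinj : Set.InjOn (fun u : SignedPerm n => s(u, prefixRevPerm ⟨n - 1, by omega⟩ u))
        {u : SignedPerm n | u.1 ⟨n - 1, by omega⟩ = i ∧ u.1 ⟨0, by omega⟩ = -j} := by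
      intro u hu u' hu' heq
      simp only [Sym2.eq_iff] at heq
      rcases heq with ⟨h1, -⟩ | ⟨h1, -⟩
      · exact h1
      · exfalso
        have e1 : u.1 ⟨n - 1, by omega⟩ = i := hu.1
        have e3 : u'.1 ⟨0, h0n⟩ = -j := hu'.2
        have e2 := lastEntry_prefixRevPerm_last h0n u'
        have e4 : lastEntry u = u.1 ⟨n - 1, by omega⟩ := lastEntry_eq h0n u
        have e5 := congrArg lastEntry h1
        rw [e2, e4, e1] at e5
        omega
    rw [Set.ncard_image_of_injOn hinj]
    exact card_signedPerm_fixed_ends n hn (-j) i (neg_ne_zero.mpr hj0)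
      (by rw [Int.natAbs_neg]; exact hjn) hi0 hin habs
  · intro hij'
    apply Set.eq_empty_iff_forall_notMem.mpr
    rintro e ⟨he, u, v, rfl, hu, hv⟩
    have hadj : (burntPancakeGraph n).Adj u v := (SimpleGraph.mem_edgeSet _).mp he
    have hne : lastEntry u ≠ lastEntry v := by rw [hu, hv]; exact hij
    have hv' : v = prefixRevPerm ⟨n - 1, by omega⟩ u := adj_of_lastEntry_ne hn hadj hne
    have e2 := lastEntry_prefixRevPerm_last h0n u
    rw [← hv'] at e2
    have h3 : u.1 ⟨0, h0n⟩ = i := by omega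
    have h4 : u.1 ⟨n - 1, by omega⟩ = i := by rw [lastEntry_eq h0n] at hu; exact hu
    have h5 : (u.1 ⟨0, h0n⟩).natAbs = (u.1 ⟨n - 1, by omega⟩).natAbs := by rw [h3, h4]
    have h6 := u.2.2 h5
    have h7 := Fin.mk.inj_iff.mp h6
    omega
end

section
/- Let n ≥ 1 and let K = {k_1', k_2', …, k_m'} be a set of m distinct elements of [n] with m ≥ 5, with two designated elements k_1' and k_m'. Then there exists an ordering k_1, k_2, …, k_m of the elements of K such that k_1 = k_1', k_m = k_m', and k_i ≠ −k_{i+1} for every i ∈ {1, 2, …, m−1}. -/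
lemma base3 (a b c f g : ℤ) (hab : a ≠ b) (hac : a ≠ c) (hbc : b ≠ c) (hfg : f ≠ g) :
    ∃ l : List ℤ, l.Nodup ∧ l.toFinset = ({a, b, c} : Finset ℤ) ∧
      l.Chain' (fun x y => x ≠ -y) ∧
      (∀ h ∈ l.head?, h ≠ f) ∧ (∀ h ∈ l.getLast?, h ≠ g) := by
  by_cases hpab : a = -b
  · -- pair (a,b), middle c
    by_cases hfa : a = f
    · exact ⟨[b, c, a], by simp; omega, by ext t; simp; try tauto, by simp [List.Chain']; omega,
        by simp; omega, by simp; omega⟩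
    · by_cases hgb : b = g
      · exact ⟨[b, c, a], by simp; omega, by ext t; simp; try tauto, by simp [List.Chain']; omega,
          by simp; omega, by simp; omega⟩
      · exact ⟨[a, c, b], by simp; omega, by ext t; simp; try tauto, by simp [List.Chain']; omega,
          by simp; omega, by simp; omega⟩
  · by_cases hpac : a = -c
    · by_cases hfa : a = f
      · exact ⟨[c, b, a], by simp; omega, by ext t; simp; try tauto, by simp [List.Chain']; omega,
          by simp; omega, by simp; omega⟩
      · by_cases hgc : c = g
        · exact ⟨[c, b, a], by simp; omega, by ext t; simp; try tauto, by simp [List.Chain']; omega,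
            by simp; omega, by simp; omega⟩
        · exact ⟨[a, b, c], by simp; omega, by ext t; simp; try tauto, by simp [List.Chain']; omega,
            by simp; omega, by simp; omega⟩
    · by_cases hpbc : b = -c
      · by_cases hfb : b = f
        · exact ⟨[c, a, b], by simp; omega, by ext t; simp; try tauto, by simp [List.Chain']; omega,
            by simp; omega, by simp; omega⟩
        · by_cases hgc : c = g
          · exact ⟨[c, a, b], by simp; omega, by ext t; simp; try tauto, by simp [List.Chain']; omega,
              by simp; omega, by simp; omega⟩
          · exact ⟨[b, a, c], by simp; omega, by ext t; simp; try tauto, by simp [List.Chain']; omega,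
              by simp; omega, by simp; omega⟩
      · by_cases hfa : a = f
        · by_cases hgb : b = g
          · exact ⟨[b, c, a], by simp; omega, by ext t; simp; try tauto, by simp [List.Chain']; omega,
              by simp; omega, by simp; omega⟩
          · exact ⟨[c, a, b], by simp; omega, by ext t; simp; try tauto, by simp [List.Chain']; omega,
              by simp; omega, by simp; omega⟩
        · by_cases hgc : c = g
          · exact ⟨[a, c, b], by simp; omega, by ext t; simp; try tauto, by simp [List.Chain']; omega,
              by simp; omega, by simp; omega⟩
          · exact ⟨[a, b, c], by simp; omega, by ext t; simp; try tauto, by simp [List.Chain']; omega,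
              by simp; omega, by simp; omega⟩

lemma chain_arrange : ∀ N : ℕ, 3 ≤ N → ∀ A : Finset ℤ, A.card = N → ∀ f g : ℤ, f ≠ g →
    ∃ l : List ℤ, l.Nodup ∧ l.toFinset = A ∧ l.Chain' (fun x y => x ≠ -y) ∧
      (∀ h ∈ l.head?, h ≠ f) ∧ (∀ h ∈ l.getLast?, h ≠ g) := by
  intro N
  induction N with
  | zero => omega
  | succ N ih =>
    intro h3 A hA f g hfg
    by_cases hN : N < 3
    · -- N + 1 = 3
      have : A.card = 3 := by omega
      obtain ⟨a, b, c, hab, hac, hbc, rfl⟩ := Finset.card_eq_three.mp this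
      exact base3 a b c f g hab hac hbc hfg
    · -- N ≥ 3, card A = N+1 ≥ 4
      push_neg at hN
      -- find h ∈ A with h ≠ f, h ≠ -g
      have hex : (A \ ({f, -g} : Finset ℤ)).Nonempty := by
        rw [← Finset.card_pos]
        have h1 : (A \ ({f, -g} : Finset ℤ)).card + ({f, -g} : Finset ℤ).card
            = (A ∪ ({f, -g} : Finset ℤ)).card := Finset.card_sdiff_add_card A _
        have h2 : A.card ≤ (A ∪ ({f, -g} : Finset ℤ)).card :=
          Finset.card_le_card Finset.subset_union_left
        have h3 : ({f, -g} : Finset ℤ).card ≤ 2 := Finset.card_insert_le _ _ |>.trans (by simp)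
        omega
      obtain ⟨h, hh⟩ := hex
      rw [Finset.mem_sdiff] at hh
      obtain ⟨hhA, hh2⟩ := hh
      simp only [Finset.mem_insert, Finset.mem_singleton, not_or] at hh2
      obtain ⟨hhf, hhg⟩ := hh2
      have hcard : (A.erase h).card = N := by
        rw [Finset.card_erase_of_mem hhA, hA]; omega
      have hfg' : (-h : ℤ) ≠ g := by omega
      obtain ⟨l', hnd, htf, hch, hhd, hlast⟩ := ih hN (A.erase h) hcard (-h) g hfg'
      have hlne : l' ≠ [] := by
        intro h0; rw [h0] at htf; simp at htf
        have : (A.erase h).card = 0 := by rw [← htf]; simp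
        omega
      refine ⟨h :: l', ?_, ?_, ?_, ?_, ?_⟩
      · refine List.nodup_cons.mpr ⟨?_, hnd⟩
        intro hmem
        have : h ∈ A.erase h := by rw [← htf]; exact List.mem_toFinset.mpr hmem
        exact (Finset.notMem_erase h A) this
      · rw [List.toFinset_cons, htf, Finset.insert_erase hhA]
      · rw [List.Chain', List.isChain_cons]
        refine ⟨?_, hch⟩
        intro y hy
        have := hhd y hy
        omega
      · simp [hhf]
      · obtain ⟨b, t, rfl⟩ := List.exists_cons_of_ne_nil hlne
        rw [List.getLast?_cons_cons]
        exact hlast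

/-- any set of `m ≥ 5` distinct elements of `[n]` with designated first
and last elements can be ordered so that no element is followed by its negative. -/
theorem exists_good_ordering (n : ℕ) (hn : 1 ≤ n) (m : ℕ) (hm : 5 ≤ m)
    (K : Finset ℤ) (hK : ∀ i ∈ K, i ≠ 0 ∧ i.natAbs ≤ n) (hKcard : K.card = m)
    (k1 km : ℤ) (hk1 : k1 ∈ K) (hkm : km ∈ K) (hne : k1 ≠ km) :
    ∃ l : List ℤ, l.Nodup ∧ l.toFinset = K ∧ l.head? = some k1 ∧
      l.getLast? = some km ∧ l.Chain' (fun a b => a ≠ -b) := by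
  set S : Finset ℤ := K \ {k1, km} with hS
  have hScard : S.card = m - 2 := by
    rw [hS, Finset.card_sdiff_of_subset (by intro x hx; simp at hx; rcases hx with rfl | rfl <;> assumption)]
    simp [hKcard, Finset.card_insert_of_notMem, hne]
  have h3 : 3 ≤ S.card := by omega
  have hfg : (-k1 : ℤ) ≠ -km := by omega
  obtain ⟨L, hnd, htf, hch, hhd, hlast⟩ := chain_arrange S.card h3 S rfl (-k1) (-km) hfg
  have hLne : L ≠ [] := by
    intro h0; rw [h0] at htf; simp at htf
    rw [← htf] at hScard; simp at hScard; omega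
  have hk1S : k1 ∉ S := by simp [hS]
  have hkmS : km ∉ S := by simp [hS]
  have hk1L : k1 ∉ L := fun h => hk1S (htf ▸ List.mem_toFinset.mpr h)
  have hkmL : km ∉ L := fun h => hkmS (htf ▸ List.mem_toFinset.mpr h)
  refine ⟨k1 :: (L ++ [km]), ?_, ?_, ?_, ?_, ?_⟩
  · refine List.nodup_cons.mpr ⟨?_, ?_⟩
    · simp [hk1L, hne]
    · rw [List.nodup_append]
      exact ⟨hnd, List.nodup_singleton km, by simp; exact fun a ha hak => hkmL (hak ▸ ha)⟩
  · ext t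
    simp only [List.toFinset_cons, List.toFinset_append, Finset.mem_insert, Finset.mem_union,
      List.toFinset_cons, List.toFinset_nil, htf]
    simp only [hS, Finset.mem_sdiff, Finset.mem_insert, Finset.mem_singleton]
    constructor
    · rintro (rfl | ⟨ht, -⟩ | ht)
      · exact hk1
      · exact ht
      · simp at ht; subst ht; exact hkm
    · intro ht
      by_cases h1 : t = k1
      · left; exact h1
      · by_cases h2 : t = km
        · right; right; simp [h2]
        · right; left; exact ⟨ht, fun hc => by rcases hc with rfl | rfl <;> simp_all⟩
  · rfl
  · show (k1 :: (L ++ [km])).getLast? = some km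
    rw [show k1 :: (L ++ [km]) = (k1 :: L) ++ [km] by simp]
    exact List.getLast?_concat
  · rw [List.Chain', List.isChain_cons]
    constructor
    · intro y hy
      rw [List.head?_append_of_ne_nil _ hLne] at hy
      have := hhd y hy
      omega
    · rw [List.isChain_append]
      refine ⟨hch, by simp, ?_⟩
      intro x hx y hy
      simp at hy; subst hy
      have := hlast x hx
      omega
end

section
/- For every integer n ≥ 3, the burnt pancake graph BP_n is not a bipartite graph. -/

lemma myWordId {n : ℕ} (hn : 3 ≤ n) (u : Fin n → ℤ) :
    prefixRev ⟨2, by omega⟩ (prefixRev ⟨1, by omega⟩ (prefixRev ⟨2, by omega⟩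
      (prefixRev ⟨1, by omega⟩ (prefixRev ⟨0, by omega⟩ (prefixRev ⟨2, by omega⟩
      (prefixRev ⟨0, by omega⟩ (prefixRev ⟨1, by omega⟩ (prefixRev ⟨0, by omega⟩ u)))))))) = u := by
  funext i
  by_cases hi : i.val ≤ 2
  · rcases (by omega : i.val = 0 ∨ i.val = 1 ∨ i.val = 2) with h | h | h <;>
      rw [show i = ⟨i.val, i.isLt⟩ from rfl] <;> simp only [h] <;> simp [prefixRev, revIdx]
  · have h2 : ¬ i.val ≤ 2 := hi
    have h1 : ¬ i.val ≤ 1 := by omega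
    have h0 : ¬ i.val ≤ 0 := by omega
    simp [prefixRev, h0, h1, h2]

lemma prefixRevPerm_ne {n : ℕ} (hn : 0 < n) (k : Fin n) (v : SignedPerm n) :
    prefixRevPerm k v ≠ v := by
  intro h
  have h0 : (prefixRevPerm k v).1 ⟨0, hn⟩ = v.1 ⟨0, hn⟩ := by rw [h]
  have hk : revIdx k ⟨0, hn⟩ = k := by
    simp [revIdx]
  have h1 : (prefixRevPerm k v).1 ⟨0, hn⟩ = -v.1 k := by
    simp [prefixRevPerm, prefixRev, hk]
  rw [h1] at h0
  have h2 : (fun i => (v.1 i).natAbs) k = (fun i => (v.1 i).natAbs) ⟨0, hn⟩ := by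
    simp only []
    omega
  have h3 : k = ⟨0, hn⟩ := v.2.2 h2
  rw [h3] at h0
  have := (v.2.1 ⟨0, hn⟩).1
  omega

def idSP (n : ℕ) : SignedPerm n :=
  ⟨fun i => (i.val : ℤ) + 1, by
    refine ⟨fun i => ⟨?_, ?_⟩, fun i j h => ?_⟩
    · show ((i.val : ℤ) + 1) ≠ 0
      omega
    · show ((i.val : ℤ) + 1).natAbs ≤ n
      have := i.isLt; omega
    · have h' : ((i.val : ℤ) + 1).natAbs = ((j.val : ℤ) + 1).natAbs := h
      exact Fin.ext (by omega)⟩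

set_option maxHeartbeats 2000000 in
/-- `BP_n` is not bipartite for `n ≥ 3`. -/
theorem burntPancake_not_bipartite (n : ℕ) (hn : 3 ≤ n) :
    ¬ ∃ s : Set (SignedPerm n), ∀ u v : SignedPerm n,
      (burntPancakeGraph n).Adj u v → ((u ∈ s ∧ v ∉ s) ∨ (u ∉ s ∧ v ∈ s)) := by
  rintro ⟨s, hs⟩
  have h3 : 0 < n := by omega
  set k0 : Fin n := ⟨0, by omega⟩ with hk0
  set k1 : Fin n := ⟨1, by omega⟩ with hk1
  set k2 : Fin n := ⟨2, by omega⟩ with hk2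
  set v0 : SignedPerm n := idSP n with hv0
  set v1 := prefixRevPerm k0 v0 with hv1
  set v2 := prefixRevPerm k1 v1 with hv2
  set v3 := prefixRevPerm k0 v2 with hv3
  set v4 := prefixRevPerm k2 v3 with hv4
  set v5 := prefixRevPerm k0 v4 with hv5
  set v6 := prefixRevPerm k1 v5 with hv6
  set v7 := prefixRevPerm k2 v6 with hv7
  set v8 := prefixRevPerm k1 v7 with hv8
  set v9 := prefixRevPerm k2 v8 with hv9
  have hval : ∀ (k : Fin n) (u : SignedPerm n), (prefixRevPerm k u).1 = prefixRev k u.1 :=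
    fun _ _ => rfl
  have hcyc : v9 = v0 := by
    apply Subtype.ext
    simp only [hv9, hv8, hv7, hv6, hv5, hv4, hv3, hv2, hv1, hk0, hk1, hk2, hval]
    exact myWordId hn v0.1
  have adj : ∀ (k : Fin n) (v : SignedPerm n),
      (burntPancakeGraph n).Adj v (prefixRevPerm k v) :=
    fun k v => ⟨Ne.symm (prefixRevPerm_ne h3 k v), k, Or.inl rfl⟩
  have a0 := hs v0 v1 (adj k0 v0)
  have a1 := hs v1 v2 (adj k1 v1)
  have a2 := hs v2 v3 (adj k0 v2)
  have a3 := hs v3 v4 (adj k2 v3)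
  have a4 := hs v4 v5 (adj k0 v4)
  have a5 := hs v5 v6 (adj k1 v5)
  have a6 := hs v6 v7 (adj k2 v6)
  have a7 := hs v7 v8 (adj k1 v7)
  have a8 := hs v8 v9 (adj k2 v8)
  rw [hcyc] at a8
  clear_value v0 v1 v2 v3 v4 v5 v6 v7 v8 v9
  clear hs adj hcyc hval hv1 hv2 hv3 hv4 hv5 hv6 hv7 hv8 hv9 hv0 hk0 hk1 hk2
  tauto
end
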